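/- arXiv:0812.3068 — 12 statements merged into one kernel-verified Lean document; each statement's English description precedes it below -/
import Mathlib

section
/- If two binary relations R₁ and R₂ both satisfy the branching-bisimulation transfer condition (T), then their relational composition R₁ ; R₂ also satisfies (T). -/
universe u

section BB

variable {S A : Type}

/-- Reflexive-transitive closure of τ-transitions: s ⇒ s'. -/
def Taus (Tr : S → A → S → Prop) (τ : A) : S → S → Prop :=
  Relation.ReflTransGen (fun s s' => Tr s τ s')

/-- One or more τ-transitions: s ⇒⁺ s'. -/
def TausPlus (Tr : S → A → S → Prop) (τ : A) : S → S → Prop :=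
  Relation.TransGen (fun s s' => Tr s τ s')

/-- Optional step s →(a) s'. -/
def OptStep (Tr : S → A → S → Prop) (τ : A) (a : A) (s s' : S) : Prop :=
  Tr s a s' ∨ (a = τ ∧ s = s')

/-- Condition (T): branching-bisimulation transfer condition. -/
def CondT (Tr : S → A → S → Prop) (τ : A) (R : S → S → Prop) : Prop :=
  ∀ s t a s', R s t → Tr s a s' →
    ∃ t'' t', Taus Tr τ t t'' ∧ OptStep Tr τ a t'' t' ∧ R s t'' ∧ R s' t'

/-- Condition (D): full mutually related divergence. -/
def CondD (Tr : S → A → S → Prop) (τ : A) (R : S → S → Prop) : Prop :=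
  ∀ s t (f : ℕ → S), R s t → f 0 = s → (∀ k, Tr (f k) τ (f (k + 1))) →
    (∀ k, R (f k) t) →
    ∃ g : ℕ → S, g 0 = t ∧ (∀ l, Tr (g l) τ (g (l + 1))) ∧ ∀ k l, R (f k) (g l)

/-- Condition (D₁): one-step divergence simulation with related divergence. -/
def CondD1 (Tr : S → A → S → Prop) (τ : A) (R : S → S → Prop) : Prop :=
  ∀ s t (f : ℕ → S), R s t → f 0 = s → (∀ k, Tr (f k) τ (f (k + 1))) →
    (∀ k, R (f k) t) →
    ∃ t' k, Tr t τ t' ∧ R (f k) t'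

/-- Condition (D₂): single τ-step divergence simulation of arbitrary divergences. -/
def CondD2 (Tr : S → A → S → Prop) (τ : A) (R : S → S → Prop) : Prop :=
  ∀ s t (f : ℕ → S), R s t → f 0 = s → (∀ k, Tr (f k) τ (f (k + 1))) →
    ∃ t' k, Tr t τ t' ∧ R (f k) t'

/-- Condition (D₃): full divergence simulation with a mapping σ. -/
def CondD3 (Tr : S → A → S → Prop) (τ : A) (R : S → S → Prop) : Prop :=
  ∀ s t (f : ℕ → S), R s t → f 0 = s → (∀ k, Tr (f k) τ (f (k + 1))) →
    ∃ (g : ℕ → S) (σ : ℕ → ℕ), g 0 = t ∧ (∀ l, Tr (g l) τ (g (l + 1))) ∧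
      ∀ l, R (f (σ l)) (g l)

/-- Condition (D₄): reach via ⇒⁺ a state related to some state on the divergence. -/
def CondD4 (Tr : S → A → S → Prop) (τ : A) (R : S → S → Prop) : Prop :=
  ∀ s t (f : ℕ → S), R s t → f 0 = s → (∀ k, Tr (f k) τ (f (k + 1))) →
    (∀ k, R (f k) t) →
    ∃ t' k, TausPlus Tr τ t t' ∧ R (f k) t'

/-- s ≈₃ t. -/
def Approx3 (Tr : S → A → S → Prop) (τ : A) (s t : S) : Prop :=
  ∃ R : S → S → Prop, Symmetric R ∧ CondT Tr τ R ∧ CondD3 Tr τ R ∧ R s t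

/-- s ≈₄ t. -/
def Approx4 (Tr : S → A → S → Prop) (τ : A) (s t : S) : Prop :=
  ∃ R : S → S → Prop, Symmetric R ∧ CondT Tr τ R ∧ CondD4 Tr τ R ∧ R s t

/-- s ≈₁ t. -/
def Approx1 (Tr : S → A → S → Prop) (τ : A) (s t : S) : Prop :=
  ∃ R : S → S → Prop, Symmetric R ∧ CondT Tr τ R ∧ CondD1 Tr τ R ∧ R s t

/-- s ≈₂ t. -/
def Approx2 (Tr : S → A → S → Prop) (τ : A) (s t : S) : Prop :=
  ∃ R : S → S → Prop, Symmetric R ∧ CondT Tr τ R ∧ CondD2 Tr τ R ∧ R s t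

/-- Branching bisimilarity with explicit divergence (conditions (T) and (D)). -/
def BBED (Tr : S → A → S → Prop) (τ : A) (s t : S) : Prop :=
  ∃ R : S → S → Prop, Symmetric R ∧ CondT Tr τ R ∧ CondD Tr τ R ∧ R s t

/-- Stuttering closure of a binary relation. -/
def StutClos (Tr : S → A → S → Prop) (τ : A) (R : S → S → Prop) (s t : S) : Prop :=
  ∃ sm sp tm tp, Taus Tr τ sm s ∧ Taus Tr τ s sp ∧ Taus Tr τ tm t ∧ Taus Tr τ t tp ∧
    R sm tp ∧ R sp tm

end BB

/-- Pushing τ-steps through a relation satisfying (T). -/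
lemma taus_sim {S A : Type} (Tr : S → A → S → Prop) (τ : A)
    (R : S → S → Prop) (h : CondT Tr τ R) {t t'' u : S}
    (ht : Taus Tr τ t t'') (hR : R t u) :
    ∃ u'', Taus Tr τ u u'' ∧ R t'' u'' := by
  induction ht with
  | refl => exact ⟨u, Relation.ReflTransGen.refl, hR⟩
  | tail _ hstep ih =>
    obtain ⟨v, hv, hRv⟩ := ih
    obtain ⟨w'', w', hw, hopt, _, hRw⟩ := h _ _ _ _ hRv hstep
    rcases hopt with hstep' | ⟨_, rfl⟩
    · exact ⟨w', hv.trans (hw.tail hstep'), hRw⟩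
    · exact ⟨w'', hv.trans hw, hRw⟩

theorem comp_condT {S A : Type} (Tr : S → A → S → Prop) (τ : A)
    (R₁ R₂ : S → S → Prop) (h₁ : CondT Tr τ R₁) (h₂ : CondT Tr τ R₂) :
    CondT Tr τ (fun s u => ∃ t, R₁ s t ∧ R₂ t u) := by
  rintro s u a s' ⟨t, hR1, hR2⟩ hstep
  obtain ⟨t'', t', htt, hopt, hR1'', hR1'⟩ := h₁ _ _ _ _ hR1 hstep
  obtain ⟨ub, huub, hR2''⟩ := taus_sim Tr τ R₂ h₂ htt hR2
  rcases hopt with hstep' | ⟨rfl, rfl⟩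
  · obtain ⟨u₃, u', hub, hopt', hR2₃, hR2'⟩ := h₂ _ _ _ _ hR2'' hstep'
    exact ⟨u₃, u', huub.trans hub, hopt', ⟨t'', hR1'', hR2₃⟩, ⟨t', hR1', hR2'⟩⟩
  · exact ⟨ub, ub, huub, Or.inr ⟨rfl, rfl⟩, ⟨t'', hR1'', hR2''⟩, ⟨t'', hR1', hR2''⟩⟩
end

section
/- If two binary relations R₁ and R₂ both satisfy conditions (T) and (D₃), then their relational composition R₁ ; R₂ satisfies (D₃). -/
universe u

theorem comp_condD3 {S A : Type} (Tr : S → A → S → Prop) (τ : A)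
    (R₁ R₂ : S → S → Prop)
    (hT₁ : CondT Tr τ R₁) (hD₁ : CondD3 Tr τ R₁)
    (hT₂ : CondT Tr τ R₂) (hD₂ : CondD3 Tr τ R₂) :
    CondD3 Tr τ (fun s u => ∃ t, R₁ s t ∧ R₂ t u) := by
  rintro s u f ⟨t, hst, htu⟩ hf0 hstep
  obtain ⟨g, σ, hg0, hgstep, hgrel⟩ := hD₁ s t f hst hf0 hstep
  obtain ⟨h, σ', hh0, hhstep, hhrel⟩ := hD₂ t u g htu hg0 hgstep
  exact ⟨h, σ ∘ σ', hh0, hhstep, fun l => ⟨g (σ' l), hgrel _, hhrel l⟩⟩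
end

section
/- A binary relation R satisfies condition (D₂) (single τ-step divergence simulation) if and only if it satisfies condition (D₃) (full divergence simulation). -/
universe u

theorem condD2_iff_condD3 {S A : Type} (Tr : S → A → S → Prop) (τ : A)
    (R : S → S → Prop) :
    CondD2 Tr τ R ↔ CondD3 Tr τ R := by
  constructor
  · intro h2 s t f hR hf0 hsteps
    classical
    have key : ∀ p : {p : S × ℕ // R (f p.2) p.1},
        ∃ q : {p : S × ℕ // R (f p.2) p.1}, Tr p.1.1 τ q.1.1 := by
      rintro ⟨⟨u, k⟩, hrel⟩
      obtain ⟨t', j, htr, hrel'⟩ :=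
        h2 (f k) u (fun n => f (k + n)) hrel rfl
          (fun m => by simpa [Nat.add_assoc] using hsteps (k + m))
      exact ⟨⟨(t', k + j), hrel'⟩, htr⟩
    choose nxt hnxt using key
    have hbase : R (f (0 : ℕ)) t := by rw [hf0]; exact hR
    let F : ℕ → {p : S × ℕ // R (f p.2) p.1} := fun n => nxt^[n] ⟨(t, 0), hbase⟩
    refine ⟨fun l => (F l).1.1, fun l => (F l).1.2, rfl, ?_, fun l => (F l).2⟩
    intro l
    have : F (l + 1) = nxt (F l) := Function.iterate_succ_apply' nxt l _
    show Tr (F l).1.1 τ (F (l+1)).1.1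
    rw [this]
    exact hnxt (F l)
  · intro h3 s t f hR hf0 hsteps
    obtain ⟨g, σ, hg0, hgstep, hrel⟩ := h3 s t f hR hf0 hsteps
    exact ⟨g 1, σ 1, hg0 ▸ hgstep 0, hrel 1⟩
end

section
/- The relation ≈₃ (existence of a symmetric relation satisfying conditions (T) and (D₃) relating two states) is an equivalence relation on the states of any labelled transition system. -/
universe u

section Aux

variable {S A : Type} {Tr : S → A → S → Prop} {τ : A} {R R1 R2 : S → S → Prop}

lemma taus_of_opt {u u' : S} (h : OptStep Tr τ τ u u') : Taus Tr τ u u' := by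
  rcases h with h | ⟨_, rfl⟩
  · exact Relation.ReflTransGen.single h
  · exact Relation.ReflTransGen.refl

lemma condT_taus (hT : CondT Tr τ R) {t t'' u : S} (htt : Taus Tr τ t t'')
    (hR : R t u) : ∃ u'', Taus Tr τ u u'' ∧ R t'' u'' := by
  induction htt with
  | refl => exact ⟨u, .refl, hR⟩
  | tail hseq hstep ih =>
    obtain ⟨u₁, hu₁, hR₁⟩ := ih
    obtain ⟨u₂, u₃, h2, h3, _, hR3⟩ := hT _ _ _ _ hR₁ hstep
    exact ⟨u₃, hu₁.trans (h2.trans (taus_of_opt h3)), hR3⟩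

lemma condT_comp (h1 : CondT Tr τ R1) (h2 : CondT Tr τ R2) :
    CondT Tr τ (fun s u => ∃ t, R1 s t ∧ R2 t u) := by
  rintro s u a s' ⟨t, hst, htu⟩ hstep
  obtain ⟨t'', t', ht1, ht2, hRt'', hRt'⟩ := h1 s t a s' hst hstep
  obtain ⟨u₀, hu₀, hR2⟩ := condT_taus h2 ht1 htu
  rcases ht2 with hstep2 | ⟨rfl, rfl⟩
  · obtain ⟨u'', u', hu1, hu2, hRu'', hRu'⟩ := h2 _ _ _ _ hR2 hstep2
    exact ⟨u'', u', hu₀.trans hu1, hu2, ⟨t'', hRt'', hRu''⟩, ⟨t', hRt', hRu'⟩⟩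
  · exact ⟨u₀, u₀, hu₀, Or.inr ⟨rfl, rfl⟩, ⟨t'', hRt'', hR2⟩, ⟨t'', hRt', hR2⟩⟩

lemma condD3_comp (h1 : CondD3 Tr τ R1) (h2 : CondD3 Tr τ R2) :
    CondD3 Tr τ (fun s u => ∃ t, R1 s t ∧ R2 t u) := by
  rintro s u f ⟨t, hst, htu⟩ hf0 hstep
  obtain ⟨g, σ, hg0, hgstep, hgrel⟩ := h1 s t f hst hf0 hstep
  obtain ⟨h, σ', hh0, hhstep, hhrel⟩ := h2 t u g htu hg0 hgstep
  exact ⟨h, σ ∘ σ', hh0, hhstep, fun l => ⟨g (σ' l), hgrel _, hhrel l⟩⟩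

lemma condT_union (h1 : CondT Tr τ R1) (h2 : CondT Tr τ R2) :
    CondT Tr τ (fun s t => R1 s t ∨ R2 s t) := by
  rintro s t a s' (h | h) hstep
  · obtain ⟨t'', t', a1, a2, a3, a4⟩ := h1 s t a s' h hstep
    exact ⟨t'', t', a1, a2, Or.inl a3, Or.inl a4⟩
  · obtain ⟨t'', t', a1, a2, a3, a4⟩ := h2 s t a s' h hstep
    exact ⟨t'', t', a1, a2, Or.inr a3, Or.inr a4⟩

lemma condD3_union (h1 : CondD3 Tr τ R1) (h2 : CondD3 Tr τ R2) :
    CondD3 Tr τ (fun s t => R1 s t ∨ R2 s t) := by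
  rintro s t f (h | h) hf0 hstep
  · obtain ⟨g, σ, a1, a2, a3⟩ := h1 s t f h hf0 hstep
    exact ⟨g, σ, a1, a2, fun l => Or.inl (a3 l)⟩
  · obtain ⟨g, σ, a1, a2, a3⟩ := h2 s t f h hf0 hstep
    exact ⟨g, σ, a1, a2, fun l => Or.inr (a3 l)⟩

end Aux

theorem approx3_equivalence {S A : Type} (Tr : S → A → S → Prop) (τ : A) :
    Equivalence (Approx3 Tr τ) := by
  constructor
  · intro s
    refine ⟨Eq, fun _ _ h => h.symm, ?_, ?_, rfl⟩
    · rintro s t a s' rfl hstep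
      exact ⟨s, s', .refl, Or.inl hstep, rfl, rfl⟩
    · rintro s t f rfl hf0 hstep
      exact ⟨f, id, hf0, hstep, fun _ => rfl⟩
  · rintro s t ⟨R, hsym, hT, hD, hR⟩
    exact ⟨R, hsym, hT, hD, hsym hR⟩
  · rintro s t u ⟨R1, hs1, hT1, hD1, hR1⟩ ⟨R2, hs2, hT2, hD2, hR2⟩
    refine ⟨fun x z => (∃ y, R1 x y ∧ R2 y z) ∨ (∃ y, R2 x y ∧ R1 y z),
      ?_, condT_union (condT_comp hT1 hT2) (condT_comp hT2 hT1),
      condD3_union (condD3_comp hD1 hD2) (condD3_comp hD2 hD1),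
      Or.inl ⟨t, hR1, hR2⟩⟩
    rintro x z (⟨y, a, b⟩ | ⟨y, a, b⟩)
    · exact Or.inr ⟨y, hs2 b, hs1 a⟩
    · exact Or.inl ⟨y, hs1 b, hs2 a⟩
end

section
/- The relation ≈₃ is itself a symmetric relation satisfying conditions (T) and (D₃); in fact it is the largest symmetric relation satisfying (T) and (D₃). -/
universe u

theorem approx3_largest {S A : Type} (Tr : S → A → S → Prop) (τ : A) :
    Symmetric (Approx3 Tr τ) ∧ CondT Tr τ (Approx3 Tr τ) ∧ CondD3 Tr τ (Approx3 Tr τ) ∧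
      ∀ R : S → S → Prop, Symmetric R → CondT Tr τ R → CondD3 Tr τ R →
        ∀ s t, R s t → Approx3 Tr τ s t := by
  refine ⟨?_, ?_, ?_, ?_⟩
  · rintro s t ⟨R, hS, hT, hD, hR⟩
    exact ⟨R, hS, hT, hD, hS hR⟩
  · rintro s t a s' ⟨R, hS, hT, hD, hR⟩ hTr
    obtain ⟨t'', t', h1, h2, h3, h4⟩ := hT s t a s' hR hTr
    exact ⟨t'', t', h1, h2, ⟨R, hS, hT, hD, h3⟩, ⟨R, hS, hT, hD, h4⟩⟩
  · rintro s t f ⟨R, hS, hT, hD, hR⟩ hf0 hstep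
    obtain ⟨g, σ, hg0, hgs, hrel⟩ := hD s t f hR hf0 hstep
    exact ⟨g, σ, hg0, hgs, fun l => ⟨R, hS, hT, hD, hrel l⟩⟩
  · intro R hS hT hD s t hR
    exact ⟨R, hS, hT, hD, hR⟩
end

section
/- The stuttering closure of any binary relation has the stuttering property: if t₀ →τ t₁ →τ ⋯ →τ t_n, s R̂ t₀, and s R̂ t_n, then s R̂ t_i for every i ≤ n. -/
universe u

lemma chain_taus {S A : Type} (Tr : S → A → S → Prop) (τ : A) (f : ℕ → S) (n : ℕ)
    (hchain : ∀ i < n, Tr (f i) τ (f (i + 1))) :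
    ∀ a b, a ≤ b → b ≤ n → Taus Tr τ (f a) (f b) := by
  intro a b hab hbn
  induction b with
  | zero => simp_all [Taus]; exact Relation.ReflTransGen.refl
  | succ m ih =>
    rcases Nat.lt_or_ge a (m+1) with h | h
    · exact Relation.ReflTransGen.tail (ih (Nat.lt_succ_iff.mp h) (le_of_lt hbn))
        (hchain m hbn)
    · have : a = m + 1 := le_antisymm hab h
      subst this; exact Relation.ReflTransGen.refl

theorem stutClos_stuttering {S A : Type} (Tr : S → A → S → Prop) (τ : A)
    (R : S → S → Prop) (s : S) (f : ℕ → S) (n : ℕ)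
    (hchain : ∀ i < n, Tr (f i) τ (f (i + 1)))
    (h0 : StutClos Tr τ R s (f 0)) (hn : StutClos Tr τ R s (f n)) :
    ∀ i ≤ n, StutClos Tr τ R s (f i) := by
  intro i hi
  obtain ⟨sm, sp, tm, tp, hsm, hsp, htm, htp, h1, h2⟩ := h0
  obtain ⟨sm', sp', tm', tp', hsm', hsp', htm', htp', h1', h2'⟩ := hn
  exact ⟨sm', sp, tm, tp', hsm', hsp,
    htm.trans (chain_taus Tr τ f n hchain 0 i (Nat.zero_le i) hi),
    (chain_taus Tr τ f n hchain i n hi le_rfl).trans htp', h1', h2⟩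
end

section
/- If a binary relation R satisfies the branching-bisimulation transfer condition (T), then its stuttering closure R̂ also satisfies (T). -/
universe u

theorem taus_lift {S A : Type} {Tr : S → A → S → Prop} {τ : A}
    {R : S → S → Prop} (hT : CondT Tr τ R) :
    ∀ {x y v : S}, Taus Tr τ x y → R x v → ∃ u, Taus Tr τ v u ∧ R y u := by
  intro x y v hxy hR
  induction hxy with
  | refl => exact ⟨v, Relation.ReflTransGen.refl, hR⟩
  | tail hstep htr ih =>
    obtain ⟨u, hu, hRu⟩ := ih
    obtain ⟨u'', u', h1, h2, _, h4⟩ := hT _ _ _ _ hRu htr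
    refine ⟨u', ?_, h4⟩
    rcases h2 with h | ⟨_, rfl⟩
    · exact (hu.trans h1).tail h
    · exact hu.trans h1

theorem stutClos_condT {S A : Type} (Tr : S → A → S → Prop) (τ : A)
    (R : S → S → Prop) (hT : CondT Tr τ R) :
    CondT Tr τ (StutClos Tr τ R) := by
  intro s t a s' hst hstep
  obtain ⟨sm, sp, tm, tp, hsm, hsp, htm, htp, hR1, hR2⟩ := hst
  obtain ⟨u, hu, hRu⟩ := taus_lift hT hsm hR1
  obtain ⟨u'', u', h1, h2, h3, h4⟩ := hT _ _ _ _ hRu hstep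
  refine ⟨u'', u', (htp.trans hu).trans h1, h2, ?_, ?_⟩
  · exact ⟨s, s, u'', u'', Relation.ReflTransGen.refl, Relation.ReflTransGen.refl,
      Relation.ReflTransGen.refl, Relation.ReflTransGen.refl, h3, h3⟩
  · exact ⟨s', s', u', u', Relation.ReflTransGen.refl, Relation.ReflTransGen.refl,
      Relation.ReflTransGen.refl, Relation.ReflTransGen.refl, h4, h4⟩
end

section
/- If a binary relation R satisfies conditions (T) and (D₄), then its stuttering closure R̂ satisfies condition (D₃). -/
universe u

section AuxD3

variable {S A : Type}

/-- Invariant for the stepwise construction of the divergent path on the right. -/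
@[reducible] private def InvP (Tr : S → A → S → Prop) (τ : A) (R : S → S → Prop)
    (c : ℕ → S) (P : ℕ) (t u : S) : Prop :=
  Taus Tr τ t u ∧ ∃ j y, Taus Tr τ u y ∧ R (c j) y ∧
    ((∃ u₀, Taus Tr τ u₀ u ∧ R (c j) u₀) ∨ j ≤ P)

/-- Prepend a finite τ-path to an infinite τ-sequence. -/
private lemma taus_prepend (Tr : S → A → S → Prop) (τ : A) {a b : S}
    (h : Taus Tr τ a b) (f : ℕ → S) (hf0 : f 0 = b) (hf : ∀ k, Tr (f k) τ (f (k + 1))) :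
    ∃ (P : ℕ) (c : ℕ → S), c 0 = a ∧ (∀ j, c (P + j) = f j) ∧
      (∀ j, Tr (c j) τ (c (j + 1))) ∧ (∀ j, j ≤ P → Taus Tr τ (c j) b) := by
  induction h using Relation.ReflTransGen.head_induction_on with
  | refl =>
      refine ⟨0, f, hf0, by simp, hf, ?_⟩
      intro j hj
      have hj0 : j = 0 := Nat.le_zero.mp hj
      subst hj0
      rw [hf0]
      exact Relation.ReflTransGen.refl
  | @head x y hab h' ih =>
      obtain ⟨P, c, hc0, hcf, hcs, hct⟩ := ih
      refine ⟨P + 1, fun j => Nat.rec x (fun j _ => c j) j, rfl, ?_, ?_, ?_⟩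
      · intro j
        have e : P + 1 + j = (P + j) + 1 := by omega
        rw [e]
        exact hcf j
      · intro j
        cases j with
        | zero => simpa [hc0] using hab
        | succ j => exact hcs j
      · intro j hj
        cases j with
        | zero => exact Relation.ReflTransGen.head hab h'
        | succ j => exact hct j (by omega)

end AuxD3

theorem stutClos_condD3 {S A : Type} (Tr : S → A → S → Prop) (τ : A)
    (R : S → S → Prop) (hT : CondT Tr τ R) (hD4 : CondD4 Tr τ R) :
    CondD3 Tr τ (StutClos Tr τ R) := by
  classical
  intro s t f hst hf0 hfstep
  obtain ⟨sm, sp, tm, tp, hsm, hsp, htm, htp, h1, h2⟩ := hst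
  obtain ⟨P, c, hc0, hcf, hcs, hct⟩ := taus_prepend Tr τ hsm f (by rw [hf0]) hfstep
  -- the invariant holds at t
  have invt : InvP Tr τ R c P t t :=
    ⟨Relation.ReflTransGen.refl, 0, tp, htp, by rw [hc0]; exact h1, Or.inr (Nat.zero_le P)⟩
  -- from the invariant we can always take one more τ-step preserving it
  have step : ∀ u, InvP Tr τ R c P t u → ∃ u', Tr u τ u' ∧ InvP Tr τ R c P t u' := by
    rintro u ⟨htu, j, y, huy, hRy, hb⟩
    rcases Relation.ReflTransGen.cases_head huy with heq | ⟨u₁, hs1, hrest⟩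
    · subst heq
      by_cases hall : ∀ m, R (c (j + m)) u
      · obtain ⟨t', k, htp', hRk⟩ :=
          hD4 (c j) u (fun m => c (j + m)) hRy rfl (fun m => hcs (j + m)) hall
        obtain ⟨u₁, h1', hrest'⟩ := Relation.TransGen.head'_iff.mp htp'
        exact ⟨u₁, h1', Relation.ReflTransGen.tail htu h1', j + k, t', hrest', hRk,
          Or.inl ⟨u, Relation.ReflTransGen.single h1', hall k⟩⟩
      · push_neg at hall
        set m₀ := Nat.find hall with hm₀def
        have hspec : ¬ R (c (j + m₀)) u := Nat.find_spec hall
        have h0 : m₀ ≠ 0 := by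
          intro h
          rw [h] at hspec
          exact hspec hRy
        have hRm₁ : R (c (j + (m₀ - 1))) u := by
          by_contra hcon
          exact Nat.find_min hall (by omega) hcon
        obtain ⟨t'', t', hut'', hopt, hR'', hR'⟩ :=
          hT (c (j + (m₀ - 1))) u τ (c (j + (m₀ - 1) + 1)) hRm₁ (hcs (j + (m₀ - 1)))
        have hR'0 : R (c (j + m₀)) t' := by
          have e : j + (m₀ - 1) + 1 = j + m₀ := by omega
          rwa [e] at hR'
        rcases Relation.ReflTransGen.cases_head hut'' with hequ | ⟨u₁, hs1, hrest1⟩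
        · subst hequ
          rcases (show Tr u τ t' ∨ (τ = τ ∧ u = t') from hopt) with hreal | ⟨-, heq'⟩
          · exact ⟨t', hreal, Relation.ReflTransGen.tail htu hreal, j + m₀, t',
              Relation.ReflTransGen.refl, hR'0, Or.inl ⟨t', Relation.ReflTransGen.refl, hR'0⟩⟩
          · exact absurd (heq' ▸ hR'0) hspec
        · exact ⟨u₁, hs1, Relation.ReflTransGen.tail htu hs1, j + (m₀ - 1), t'', hrest1, hR'',
            Or.inl ⟨u, Relation.ReflTransGen.single hs1, hRm₁⟩⟩
    · refine ⟨u₁, hs1, Relation.ReflTransGen.tail htu hs1, j, y, hrest, hRy, ?_⟩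
      rcases hb with ⟨u₀, h₀, hr₀⟩ | hjp
      · exact Or.inl ⟨u₀, Relation.ReflTransGen.tail h₀ hs1, hr₀⟩
      · exact Or.inr hjp
  -- any state satisfying the invariant is StutClos-related to some state of f
  have rel : ∀ u, InvP Tr τ R c P t u → ∃ m, StutClos Tr τ R (f m) u := by
    rintro u ⟨htu, j, y, huy, hRy, hb⟩
    by_cases hjP : j ≤ P
    · refine ⟨0, c j, sp, tm, y, ?_, ?_, Relation.ReflTransGen.trans htm htu, huy, hRy, h2⟩
      · rw [hf0]; exact hct j hjP
      · rw [hf0]; exact hsp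
    · obtain ⟨u₀, h₀, hr₀⟩ := hb.resolve_right hjP
      have hcj : c j = f (j - P) := by
        have e : P + (j - P) = j := by omega
        have h3 := hcf (j - P)
        rwa [e] at h3
      refine ⟨j - P, c j, c j, u₀, y, ?_, ?_, h₀, huy, hRy, hr₀⟩
      · rw [hcj]
        exact Relation.ReflTransGen.refl
      · rw [hcj]
        exact Relation.ReflTransGen.refl
  choose nxt hnxt1 hnxt2 using step
  choose σf hσf using rel
  let G : ℕ → {u // InvP Tr τ R c P t u} := fun n =>
    Nat.rec (motive := fun _ => {u // InvP Tr τ R c P t u}) ⟨t, invt⟩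
      (fun _ p => ⟨nxt p.1 p.2, hnxt2 p.1 p.2⟩) n
  exact ⟨fun l => (G l).1, fun l => σf (G l).1 (G l).2, rfl,
    fun l => hnxt1 (G l).1 (G l).2, fun l => hσf (G l).1 (G l).2⟩
end

section
/- Branching bisimilarity with explicit divergence has the stuttering property: if t₀ →τ t₁ →τ ⋯ →τ t_n, s is branching bisimilar with explicit divergence to t₀ and to t_n, then s is branching bisimilar with explicit divergence to t_i for all i ≤ n. -/
universe u

section ProofAux

open Relation

variable {S A : Type}

/-- Condition (D₂⁺): reach via `⇒⁺` a state related to some state of an arbitrary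
divergence (no side condition). -/
def CondD2P (Tr : S → A → S → Prop) (τ : A) (R : S → S → Prop) : Prop :=
  ∀ s t (f : ℕ → S), R s t → f 0 = s → (∀ k, Tr (f k) τ (f (k + 1))) →
    ∃ t' k, TausPlus Tr τ t t' ∧ R (f k) t'

/-- A relation is "pre" if it is symmetric and satisfies (T) and (D₂⁺). -/
def Pre (Tr : S → A → S → Prop) (τ : A) (R : S → S → Prop) : Prop :=
  Symmetric R ∧ CondT Tr τ R ∧ CondD2P Tr τ R

/-- The union of all pre relations. -/
def Bm (Tr : S → A → S → Prop) (τ : A) : S → S → Prop :=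
  fun x y => ∃ R, Pre Tr τ R ∧ R x y

variable {Tr : S → A → S → Prop} {τ : A}

lemma pre_bm : Pre Tr τ (Bm Tr τ) := by
  refine ⟨?_, ?_, ?_⟩
  · rintro x y ⟨R, hR, hxy⟩; exact ⟨R, hR, hR.1 hxy⟩
  · rintro s t a s' ⟨R, hR, hst⟩ hstep
    obtain ⟨t'', t', h1, h2, h3, h4⟩ := hR.2.1 s t a s' hst hstep
    exact ⟨t'', t', h1, h2, ⟨R, hR, h3⟩, ⟨R, hR, h4⟩⟩
  · rintro s t f ⟨R, hR, hst⟩ hf0 hsteps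
    obtain ⟨t', k, h1, h2⟩ := hR.2.2 s t f hst hf0 hsteps
    exact ⟨t', k, h1, ⟨R, hR, h2⟩⟩

lemma bm_symm : Symmetric (Bm Tr τ) := pre_bm.1

/-- Transfer of a τ-path along a relation satisfying (T). -/
lemma transfer {R : S → S → Prop} (hT : CondT Tr τ R) :
    ∀ {s s'}, Taus Tr τ s s' → ∀ {t}, R s t → ∃ t', Taus Tr τ t t' ∧ R s' t' := by
  intro s s' h
  induction h with
  | refl => exact fun ht => ⟨_, ReflTransGen.refl, ht⟩
  | tail hab hbc ih =>
    intro t ht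
    obtain ⟨t1, htt1, hb⟩ := ih ht
    obtain ⟨t'', t', h1, h2, h3, h4⟩ := hT _ _ _ _ hb hbc
    rcases h2 with h2 | ⟨_, heq⟩
    · exact ⟨t', ReflTransGen.trans htt1 (ReflTransGen.tail h1 h2), h4⟩
    · exact ⟨t', ReflTransGen.trans htt1 (heq ▸ h1), h4⟩

lemma sub_stut {R : S → S → Prop} {x y : S} (h : R x y) : StutClos Tr τ R x y :=
  ⟨x, x, y, y, ReflTransGen.refl, ReflTransGen.refl, ReflTransGen.refl,
    ReflTransGen.refl, h, h⟩

/-- The stuttering closure of a pre relation is pre. -/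
lemma pre_stut {R : S → S → Prop} (hR : Pre Tr τ R) : Pre Tr τ (StutClos Tr τ R) := by
  obtain ⟨hsym, hT, hD⟩ := hR
  refine ⟨?_, ?_, ?_⟩
  · rintro x y ⟨sm, sp, tm, tp, h1, h2, h3, h4, h5, h6⟩
    exact ⟨tm, tp, sm, sp, h3, h4, h1, h2, hsym h6, hsym h5⟩
  · rintro x y a x' ⟨sm, sp, tm, tp, h1, h2, h3, h4, h5, h6⟩ hstep
    obtain ⟨v, hv1, hv2⟩ := transfer hT h1 h5
    obtain ⟨t'', t', k1, k2, k3, k4⟩ := hT _ _ _ _ hv2 hstep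
    exact ⟨t'', t', ReflTransGen.trans h4 (ReflTransGen.trans hv1 k1), k2,
      sub_stut k3, sub_stut k4⟩
  · rintro x y f ⟨sm, sp, tm, tp, h1, h2, h3, h4, h5, h6⟩ hf0 hsteps
    obtain ⟨v, hv1, hv2⟩ := transfer hT h1 h5
    obtain ⟨t', k, k1, k2⟩ := hD x v f hv2 hf0 hsteps
    exact ⟨t', k, TransGen.trans_right (ReflTransGen.trans h4 hv1) k1, sub_stut k2⟩

lemma stut_bm {x y : S} (h : StutClos Tr τ (Bm Tr τ) x y) : Bm Tr τ x y :=
  ⟨StutClos Tr τ (Bm Tr τ), pre_stut pre_bm, h⟩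

/-- Extract a finite indexed path from a `Taus`. -/
lemma path_of_taus {a b : S} (h : Taus Tr τ a b) :
    ∃ m, ∃ p : ℕ → S, p 0 = a ∧ p m = b ∧ ∀ i < m, Tr (p i) τ (p (i + 1)) := by
  induction h with
  | refl => exact ⟨0, fun _ => a, rfl, rfl, fun i hi => absurd hi (by omega)⟩
  | @tail b' c h1 h2 ih =>
    obtain ⟨m, p, hp0, hpm, hpstep⟩ := ih
    refine ⟨m + 1, fun i => if i = m + 1 then c else p i, by simp [hp0], by simp, ?_⟩
    intro i hi
    by_cases hir : i = m
    · show Tr (if i = m + 1 then c else p i) τ (if i + 1 = m + 1 then c else p (i + 1))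
      rw [if_neg (by omega), if_pos (show i + 1 = m + 1 by omega), hir, hpm]
      exact h2
    · have him : i < m := by omega
      show Tr (if i = m + 1 then c else p i) τ (if i + 1 = m + 1 then c else p (i + 1))
      rw [if_neg (by omega), if_neg (by omega)]
      exact hpstep i him

lemma path_of_tausplus {a b : S} (h : TausPlus Tr τ a b) :
    ∃ m, 1 ≤ m ∧ ∃ p : ℕ → S, p 0 = a ∧ p m = b ∧ ∀ i < m, Tr (p i) τ (p (i + 1)) := by
  obtain ⟨c, h1, h2⟩ : ∃ c, Tr a τ c ∧ Taus Tr τ c b := by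
    induction h with
    | single h1 => exact ⟨_, h1, ReflTransGen.refl⟩
    | tail _ h2 ih =>
      obtain ⟨c, k1, k2⟩ := ih
      exact ⟨c, k1, ReflTransGen.tail k2 h2⟩
  obtain ⟨m, p, hp0, hpm, hpstep⟩ := path_of_taus h2
  refine ⟨m + 1, by omega, fun i => if i = 0 then a else p (i - 1), by simp, ?_, ?_⟩
  · show (if m + 1 = 0 then a else p (m + 1 - 1)) = b
    rw [if_neg (by omega)]
    simpa using hpm
  · intro i hi
    by_cases hi0 : i = 0
    · subst hi0
      show Tr (if 0 = 0 then a else p (0 - 1)) τ (if 1 = 0 then a else p (1 - 1))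
      rw [if_pos rfl, if_neg (by omega)]
      simpa [hp0] using h1
    · show Tr (if i = 0 then a else p (i - 1)) τ (if i + 1 = 0 then a else p (i + 1 - 1))
      rw [if_neg hi0, if_neg (by omega)]
      have : i + 1 - 1 = (i - 1) + 1 := by omega
      rw [this]
      exact hpstep (i - 1) (by omega)

lemma taus_of_path {m : ℕ} {p : ℕ → S} (hstep : ∀ i < m, Tr (p i) τ (p (i + 1))) :
    ∀ i j, i ≤ j → j ≤ m → Taus Tr τ (p i) (p j) := by
  intro i j
  induction j with
  | zero =>
    intro hij _
    have : i = 0 := by omega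
    subst this
    exact ReflTransGen.refl
  | succ k ih =>
    intro hij hjm
    by_cases hik : i = k + 1
    · subst hik; exact ReflTransGen.refl
    · exact ReflTransGen.tail (ih (by omega) (by omega)) (hstep k (by omega))

/-- Concatenate infinitely many nonempty finite τ-paths into a divergence. -/
lemma concat (Inv Good : S → Prop) (u : S) (hu : Inv u)
    (hstep : ∀ w, Inv w → ∃ m, 1 ≤ m ∧ ∃ p : ℕ → S, p 0 = w ∧
      (∀ i < m, Tr (p i) τ (p (i + 1))) ∧ (∀ i ≤ m, Good (p i)) ∧ Inv (p m)) :
    ∃ h : ℕ → S, h 0 = u ∧ (∀ j, Tr (h j) τ (h (j + 1))) ∧ ∀ j, Good (h j) := by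
  classical
  choose M hM P hP0 hPstep hPgood hPinv using hstep
  obtain ⟨ms, hms0, hmsS⟩ :
      ∃ ms : ℕ → {w : S // Inv w}, ms 0 = ⟨u, hu⟩ ∧
        ∀ n, ms (n + 1) = ⟨P (ms n).1 (ms n).2 (M (ms n).1 (ms n).2), hPinv _ _⟩ :=
    ⟨fun n => Nat.rec ⟨u, hu⟩ (fun _ q => ⟨P q.1 q.2 (M q.1 q.2), hPinv _ _⟩) n,
      rfl, fun n => rfl⟩
  obtain ⟨len, hlendef⟩ : ∃ len : ℕ → ℕ, ∀ n, len n = M (ms n).1 (ms n).2 :=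
    ⟨_, fun n => rfl⟩
  obtain ⟨sg, hsgdef⟩ : ∃ sg : ℕ → ℕ → S, ∀ n, sg n = P (ms n).1 (ms n).2 :=
    ⟨_, fun n => rfl⟩
  obtain ⟨off, hoff0, hoffS⟩ :
      ∃ off : ℕ → ℕ, off 0 = 0 ∧ ∀ n, off (n + 1) = off n + len n :=
    ⟨fun n => Nat.rec 0 (fun k acc => acc + len k) n, rfl, fun n => rfl⟩
  have hlen1 : ∀ n, 1 ≤ len n := by intro n; rw [hlendef]; exact hM _ _
  have hsg0 : ∀ n, sg n 0 = (ms n).1 := by intro n; rw [hsgdef]; exact hP0 _ _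
  have hmsval : ∀ n, (ms (n + 1)).1 = sg n (len n) := by
    intro n; rw [hsgdef, hlendef, hmsS]
  have hsgstep : ∀ n, ∀ i < len n, Tr (sg n i) τ (sg n (i + 1)) := by
    intro n i hi
    rw [hsgdef]
    exact hPstep _ _ i (by rw [← hlendef]; exact hi)
  have hsggood : ∀ n, ∀ i ≤ len n, Good (sg n i) := by
    intro n i hi
    rw [hsgdef]
    exact hPgood _ _ i (by rw [← hlendef]; exact hi)
  have hoffmono : Monotone off :=
    monotone_nat_of_le_succ (fun n => by rw [hoffS]; have := hlen1 n; omega)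
  have hbracket : ∀ j, ∃ n, off n ≤ j ∧ j + 1 ≤ off (n + 1) := by
    intro j
    induction j with
    | zero =>
      refine ⟨0, by omega, ?_⟩
      have h1 := hoffS 0
      have h2 := hlen1 0
      omega
    | succ j ih =>
      obtain ⟨n, h1, h2⟩ := ih
      by_cases hc : j + 1 + 1 ≤ off (n + 1)
      · exact ⟨n, by omega, hc⟩
      · refine ⟨n + 1, by omega, ?_⟩
        have h3 := hoffS (n + 1)
        have h4 := hlen1 (n + 1)
        omega
  choose idx hidx1 hidx2 using hbracket
  have huniq : ∀ j n, off n ≤ j → j + 1 ≤ off (n + 1) → idx j = n := by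
    intro j n h1 h2
    rcases lt_trichotomy (idx j) n with h | h | h
    · exfalso
      have hmono := hoffmono (show idx j + 1 ≤ n from h)
      have h3 := hidx2 j
      omega
    · exact h
    · exfalso
      have hmono := hoffmono (show n + 1 ≤ idx j from h)
      have h3 := hidx1 j
      omega
  refine ⟨fun j => sg (idx j) (j - off (idx j)), ?_, ?_, ?_⟩
  · have h0 : idx 0 = 0 := by
      apply huniq
      · omega
      · have h1 := hoffS 0
        have h2 := hlen1 0
        omega
    show sg (idx 0) (0 - off (idx 0)) = u
    rw [h0, Nat.zero_sub, hsg0, hms0]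
  · intro j
    have e1 := hidx1 j
    have e2 := hidx2 j
    have e3 := hoffS (idx j)
    have e4 := hlen1 (idx j)
    by_cases hc : j + 1 + 1 ≤ off (idx j + 1)
    · have hidxe : idx (j + 1) = idx j := huniq (j + 1) (idx j) (by omega) hc
      show Tr (sg (idx j) (j - off (idx j))) τ
        (sg (idx (j + 1)) (j + 1 - off (idx (j + 1))))
      rw [hidxe]
      have harg : j + 1 - off (idx j) = (j - off (idx j)) + 1 := by omega
      rw [harg]
      exact hsgstep (idx j) _ (by omega)
    · have hj1 : j + 1 = off (idx j + 1) := by omega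
      have hidxe : idx (j + 1) = idx j + 1 := by
        apply huniq
        · omega
        · have h3 := hoffS (idx j + 1)
          have h4 := hlen1 (idx j + 1)
          omega
      show Tr (sg (idx j) (j - off (idx j))) τ
        (sg (idx (j + 1)) (j + 1 - off (idx (j + 1))))
      rw [hidxe]
      have hz : j + 1 - off (idx j + 1) = 0 := by omega
      rw [hz, hsg0, hmsval]
      have harg : len (idx j) = (j - off (idx j)) + 1 := by omega
      rw [harg]
      exact hsgstep (idx j) _ (by omega)
  · intro j
    have e1 := hidx1 j
    have e2 := hidx2 j
    have e3 := hoffS (idx j)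
    exact hsggood (idx j) _ (by omega)

/-- One segment of the divergence simulation. -/
lemma seg (f : ℕ → S) (hf : ∀ k, Tr (f k) τ (f (k + 1))) (K : ℕ) (w : S)
    (hw : Bm Tr τ (f K) w) :
    ∃ m, 1 ≤ m ∧ ∃ p : ℕ → S, p 0 = w ∧ (∀ i < m, Tr (p i) τ (p (i + 1))) ∧
      (∀ i ≤ m, ∃ k, Bm Tr τ (f k) (p i)) := by
  classical
  by_cases hall : ∀ j, K ≤ j → Bm Tr τ (f j) w
  · obtain ⟨t', k, hplus, hrel⟩ :=
      pre_bm.2.2 (f K) w (fun i => f (K + i)) hw rfl (fun i => hf (K + i))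
    obtain ⟨m, hm, p, hp0, hpm, hpstep⟩ := path_of_tausplus hplus
    refine ⟨m, hm, p, hp0, hpstep, ?_⟩
    intro i hi
    refine ⟨K + k, stut_bm ⟨f (K + k), f (K + k), w, t', ReflTransGen.refl,
      ReflTransGen.refl, ?_, ?_, hrel, hall _ (Nat.le_add_right _ _)⟩⟩
    · rw [← hp0]; exact taus_of_path hpstep 0 i (Nat.zero_le _) hi
    · rw [← hpm]; exact taus_of_path hpstep i m hi le_rfl
  · push_neg at hall
    have hex : ∃ j, K ≤ j ∧ ¬ Bm Tr τ (f j) w := hall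
    set j0 := Nat.find hex with hj0
    obtain ⟨hKj0, hnot⟩ := Nat.find_spec hex
    have hj0K : K < j0 := by
      rcases lt_or_eq_of_le hKj0 with h | h
      · exact h
      · exact absurd (h ▸ hw) hnot
    have hprev : Bm Tr τ (f (j0 - 1)) w := by
      have h1 : ¬ (K ≤ j0 - 1 ∧ ¬ Bm Tr τ (f (j0 - 1)) w) :=
        Nat.find_min hex (by omega)
      by_contra hc
      exact h1 ⟨by omega, hc⟩
    have hstep0 : Tr (f (j0 - 1)) τ (f j0) := by
      have := hf (j0 - 1)
      rwa [show j0 - 1 + 1 = j0 by omega] at this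
    obtain ⟨w'', w', h1, h2, h3, h4⟩ := pre_bm.2.1 _ _ _ _ hprev hstep0
    obtain ⟨r, q, hq0, hqr, hqstep⟩ := path_of_taus h1
    have hmid : ∀ i ≤ r, Bm Tr τ (f (j0 - 1)) (q i) := by
      intro i hi
      refine stut_bm ⟨f (j0 - 1), f (j0 - 1), w, w'', ReflTransGen.refl,
        ReflTransGen.refl, ?_, ?_, h3, hprev⟩
      · rw [← hq0]; exact taus_of_path hqstep 0 i (Nat.zero_le _) hi
      · rw [← hqr]; exact taus_of_path hqstep i r hi le_rfl
    rcases h2 with hreal | ⟨_, heq⟩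
    · refine ⟨r + 1, by omega, fun i => if i = r + 1 then w' else q i, ?_, ?_, ?_⟩
      · show (if 0 = r + 1 then w' else q 0) = w
        rw [if_neg (by omega)]; exact hq0
      · intro i hi
        by_cases hir : i = r
        · show Tr (if i = r + 1 then w' else q i) τ
            (if i + 1 = r + 1 then w' else q (i + 1))
          rw [if_neg (by omega), if_pos (show i + 1 = r + 1 by omega), hir, hqr]
          exact hreal
        · show Tr (if i = r + 1 then w' else q i) τ
            (if i + 1 = r + 1 then w' else q (i + 1))
          rw [if_neg (by omega), if_neg (by omega)]
          exact hqstep i (by omega)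
      · intro i hi
        by_cases hi1 : i = r + 1
        · subst hi1
          show ∃ k, Bm Tr τ (f k) (if r + 1 = r + 1 then w' else q (r + 1))
          rw [if_pos rfl]
          exact ⟨j0, h4⟩
        · show ∃ k, Bm Tr τ (f k) (if i = r + 1 then w' else q i)
          rw [if_neg hi1]
          exact ⟨j0 - 1, hmid i (by omega)⟩
    · have hrne : r ≠ 0 := by
        rintro rfl
        apply hnot
        show Bm Tr τ (f j0) w
        have hww : w = w'' := by rw [← hq0, hqr]
        rw [hww, heq]
        exact h4
      refine ⟨r, by omega, q, hq0, hqstep, ?_⟩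
      intro i hi
      exact ⟨j0 - 1, hmid i hi⟩

/-- `Bm` satisfies condition (D₃). -/
lemma bm_d3 : CondD3 Tr τ (Bm Tr τ) := by
  intro s t f hst hf0 hsteps
  have hu : ∃ k, Bm Tr τ (f k) t := ⟨0, by rwa [hf0]⟩
  have hst' : ∀ w, (∃ k, Bm Tr τ (f k) w) → ∃ m, 1 ≤ m ∧ ∃ p : ℕ → S, p 0 = w ∧
      (∀ i < m, Tr (p i) τ (p (i + 1))) ∧ (∀ i ≤ m, ∃ k, Bm Tr τ (f k) (p i)) ∧
      (∃ k, Bm Tr τ (f k) (p m)) := by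
    rintro w ⟨K, hK⟩
    obtain ⟨m, hm, p, hp0, hpstep, hgood⟩ := seg f hsteps K w hK
    exact ⟨m, hm, p, hp0, hpstep, hgood, hgood m le_rfl⟩
  obtain ⟨h, hh0, hhstep, hhgood⟩ :=
    concat (fun w => ∃ k, Bm Tr τ (f k) w) (fun w => ∃ k, Bm Tr τ (f k) w) t hu hst'
  choose σ hσ using hhgood
  exact ⟨h, σ, hh0, hhstep, hσ⟩

/-- `Bm` is transitive. -/
lemma bm_trans {x y z : S} (h1 : Bm Tr τ x y) (h2 : Bm Tr τ y z) : Bm Tr τ x z := by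
  refine ⟨fun a c => ∃ b, Bm Tr τ a b ∧ Bm Tr τ b c, ⟨?_, ?_, ?_⟩, ⟨y, h1, h2⟩⟩
  · rintro a c ⟨b, hab, hbc⟩
    exact ⟨b, bm_symm hbc, bm_symm hab⟩
  · rintro a c α a' ⟨b, hab, hbc⟩ hstep
    obtain ⟨b'', b', k1, k2, k3, k4⟩ := pre_bm.2.1 _ _ _ _ hab hstep
    obtain ⟨c1, l1, l2⟩ := transfer pre_bm.2.1 k1 hbc
    rcases k2 with hreal | ⟨ha, heq⟩
    · obtain ⟨c'', c', m1, m2, m3, m4⟩ := pre_bm.2.1 _ _ _ _ l2 hreal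
      exact ⟨c'', c', ReflTransGen.trans l1 m1, m2, ⟨b'', k3, m3⟩, ⟨b', k4, m4⟩⟩
    · exact ⟨c1, c1, l1, Or.inr ⟨ha, rfl⟩, ⟨b'', k3, l2⟩, ⟨b', k4, heq ▸ l2⟩⟩
  · rintro a c f ⟨b, hab, hbc⟩ hf0 hsteps
    obtain ⟨g, σ, hg0, hgstep, hgrel⟩ := bm_d3 a b f hab hf0 hsteps
    obtain ⟨c', l, m1, m2⟩ := pre_bm.2.2 b c g hbc hg0 hgstep
    exact ⟨c', σ l, m1, ⟨g l, hgrel l, m2⟩⟩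

/-- `Bm` satisfies full condition (D). -/
lemma bm_d : CondD Tr τ (Bm Tr τ) := by
  intro s t f hst hf0 hsteps hall
  obtain ⟨g, σ, hg0, hgstep, hgrel⟩ := bm_d3 s t f hst hf0 hsteps
  refine ⟨g, hg0, hgstep, fun k l => ?_⟩
  exact bm_trans (hall k) (bm_trans (bm_symm (hall (σ l))) (hgrel l))

/-- Condition (D) implies condition (D₂⁺). -/
lemma d_d2p {R : S → S → Prop} (hsym : Symmetric R) (hT : CondT Tr τ R)
    (hD : CondD Tr τ R) : CondD2P Tr τ R := by
  classical
  intro s t f hst hf0 hsteps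
  by_cases hall : ∀ k, R (f k) t
  · obtain ⟨g, hg0, hgstep, hgrel⟩ := hD s t f hst hf0 hsteps hall
    exact ⟨g 1, 0, TransGen.single (hg0 ▸ hgstep 0), hgrel 0 1⟩
  · push_neg at hall
    set k0 := Nat.find hall with hk0
    have hspec : ¬ R (f k0) t := Nat.find_spec hall
    have hk00 : k0 ≠ 0 := fun h => hspec (by rw [h, hf0]; exact hst)
    have hprev : R (f (k0 - 1)) t :=
      not_not.mp (Nat.find_min hall (show k0 - 1 < k0 by omega))
    have hstep0 : Tr (f (k0 - 1)) τ (f k0) := by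
      have := hsteps (k0 - 1)
      rwa [show k0 - 1 + 1 = k0 by omega] at this
    obtain ⟨t'', t', h1, h2, h3, h4⟩ := hT _ _ _ _ hprev hstep0
    rcases h2 with hreal | ⟨_, heq⟩
    · exact ⟨t', k0, TransGen.tail' h1 hreal, h4⟩
    · rcases reflTransGen_iff_eq_or_transGen.mp h1 with he | htg
      · rw [← heq, he] at h4
        exact absurd h4 hspec
      · rw [heq] at htg
        exact ⟨t', k0, htg, h4⟩

end ProofAux
theorem bbed_stuttering {S A : Type} (Tr : S → A → S → Prop) (τ : A)
    (s : S) (f : ℕ → S) (n : ℕ)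
    (hchain : ∀ i < n, Tr (f i) τ (f (i + 1)))
    (h0 : BBED Tr τ s (f 0)) (hn : BBED Tr τ s (f n)) :
    ∀ i ≤ n, BBED Tr τ s (f i) := by
  intro i hi
  obtain ⟨R0, hs0, hT0, hD0, hr0⟩ := h0
  obtain ⟨R1, hs1, hT1, hD1, hr1⟩ := hn
  have b0 : Bm Tr τ s (f 0) := ⟨R0, ⟨hs0, hT0, d_d2p hs0 hT0 hD0⟩, hr0⟩
  have bn : Bm Tr τ s (f n) := ⟨R1, ⟨hs1, hT1, d_d2p hs1 hT1 hD1⟩, hr1⟩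
  have hchainT : ∀ a b, a ≤ b → b ≤ n → Taus Tr τ (f a) (f b) := by
    intro a b
    induction b with
    | zero =>
      intro hab _
      have : a = 0 := by omega
      subst this
      exact Relation.ReflTransGen.refl
    | succ k ih =>
      intro hab hbn
      by_cases hak : a = k + 1
      · subst hak
        exact Relation.ReflTransGen.refl
      · exact Relation.ReflTransGen.tail (ih (by omega) (by omega))
          (hchain k (by omega))
  have bi : Bm Tr τ s (f i) := stut_bm ⟨s, s, f 0, f n,
    Relation.ReflTransGen.refl, Relation.ReflTransGen.refl,
    hchainT 0 i (Nat.zero_le _) hi, hchainT i n hi le_rfl, bn, b0⟩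
  exact ⟨Bm Tr τ, bm_symm, pre_bm.2.1, bm_d, bi⟩
end

section
/- Let C be a colouring (an equivalence on states) such that any two states of the same colour have the same C-coloured traces of length three (colour–action–colour). Then C is consistent: any two states of the same colour have the same C-coloured traces of every length. -/
universe u

section Colour

variable {S A : Type}

/-- `HasCT Tr τ C s tr` : `tr` is the (contracted) coloured trace of some path from `s`,
recorded as the list of (action, colour) pairs following the initial colour `C(s)`. -/
inductive HasCT (Tr : S → A → S → Prop) (τ : A) (C : S → S → Prop) :
    S → List (A × Set S) → Prop
  | nil (s : S) : HasCT Tr τ C s []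
  | tau {s s' : S} {tr : List (A × Set S)} :
      Tr s τ s' → C s s' → HasCT Tr τ C s' tr → HasCT Tr τ C s tr
  | step {s s' : S} {a : A} {tr : List (A × Set S)} :
      Tr s a s' → (a ≠ τ ∨ ¬ C s s') → HasCT Tr τ C s' tr →
      HasCT Tr τ C s ((a, {x | C s' x}) :: tr)

/-- A colouring is consistent if states of the same colour have the same coloured traces. -/
def Consistent (Tr : S → A → S → Prop) (τ : A) (C : S → S → Prop) : Prop :=
  ∀ s t, C s t → ∀ tr, HasCT Tr τ C s tr → HasCT Tr τ C t tr

/-- `s` is `C`-divergent. -/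
def CDivergent (Tr : S → A → S → Prop) (τ : A) (C : S → S → Prop) (s : S) : Prop :=
  ∃ f : ℕ → S, f 0 = s ∧ (∀ k, Tr (f k) τ (f (k + 1))) ∧ ∀ k, C (f k) s

/-- A colouring preserves divergence if no `C`-divergent state has the same colour as a
non-`C`-divergent state. -/
def PreservesDiv (Tr : S → A → S → Prop) (τ : A) (C : S → S → Prop) : Prop :=
  ∀ s t, C s t → CDivergent Tr τ C s → CDivergent Tr τ C t

end Colour
lemma splice_single {S A : Type} {Tr : S → A → S → Prop} {τ : A} {C : S → S → Prop}
    {t : S} {tr1 : List (A × Set S)} (h : HasCT Tr τ C t tr1) :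
    ∀ a c (tr : List (A × Set S)), tr1 = [(a, c)] →
      (∀ u : S, c = {x | C u x} → HasCT Tr τ C u tr) →
      HasCT Tr τ C t ((a, c) :: tr) := by
  induction h with
  | nil s => intro a c tr h; simp at h
  | tau ht hc _ ih =>
      intro a c tr heq hu
      exact HasCT.tau ht hc (ih a c tr heq hu)
  | @step s s' a' trx ht hcond _ _ =>
      intro a c tr heq hu
      obtain ⟨⟨ha, hc⟩, h2⟩ : (a' = a ∧ ({x | C s' x} : Set S) = c) ∧ trx = [] := by
        simpa using heq
      subst ha; subst h2
      rw [← hc]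
      exact HasCT.step ht hcond (hu s' hc.symm)

theorem consistent_of_length_three {S A : Type} (Tr : S → A → S → Prop) (τ : A)
    (C : S → S → Prop) (hequiv : Equivalence C)
    (h3 : ∀ s t, C s t → ∀ e : A × Set S,
      HasCT Tr τ C s [e] → HasCT Tr τ C t [e]) :
    Consistent Tr τ C := by
  intro s t hst tr h
  induction h generalizing t with
  | nil => exact HasCT.nil t
  | tau htr hc _ ih =>
      exact ih t (hequiv.trans (hequiv.symm hc) hst)
  | @step s s' a trx htr hcond hct ih =>
      have h1 : HasCT Tr τ C s [(a, {x | C s' x})] :=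
        HasCT.step htr hcond (HasCT.nil s')
      have h2 := h3 s t hst _ h1
      refine splice_single h2 a _ trx rfl ?_
      intro u hcu
      have : C s' u := by
        have : u ∈ {x | C s' x} := by rw [hcu]; exact hequiv.refl u
        exact this
      exact ih u this
end

section
/- Every consistent divergence-preserving colouring, viewed as a binary relation on states, is a branching bisimulation with explicit divergence; hence states with the same colour under some consistent divergence-preserving colouring are branching bisimilar with explicit divergence. -/
universe u

theorem hctInv {S A : Type} {Tr : S → A → S → Prop} {τ : A} {C : S → S → Prop}
    (hequiv : Equivalence C) :
    ∀ {t : S} {tr}, HasCT Tr τ C t tr → ∀ a col tr', tr = (a, col) :: tr' →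
      ∃ t'' t', Taus Tr τ t t'' ∧ C t t'' ∧ Tr t'' a t' ∧ col = {x | C t' x} ∧
        HasCT Tr τ C t' tr' := by
  intro t tr h
  induction h with
  | nil s => intro a col tr' h; simp at h
  | tau h hc _ ih =>
    intro a col tr' heq
    obtain ⟨t'', t', hT, hC, hTr, hcol, hct⟩ := ih a col tr' heq
    exact ⟨t'', t', Relation.ReflTransGen.head h hT, hequiv.trans hc hC, hTr, hcol, hct⟩
  | @step s s' a0 tr0 h hside hct _ =>
    intro a col tr' heq
    simp only [List.cons.injEq, Prod.mk.injEq] at heq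
    obtain ⟨⟨rfl, rfl⟩, rfl⟩ := heq
    exact ⟨s, s', Relation.ReflTransGen.refl, hequiv.refl s, h, rfl, hct⟩

theorem colouring_is_bbed {S A : Type} (Tr : S → A → S → Prop) (τ : A)
    (C : S → S → Prop) (hequiv : Equivalence C)
    (hcons : Consistent Tr τ C) (hdiv : PreservesDiv Tr τ C) :
    CondT Tr τ C ∧ CondD Tr τ C ∧ ∀ s t, C s t → BBED Tr τ s t := by
  have hT : CondT Tr τ C := by
    intro s t a s' hst htr
    by_cases hcase : a = τ ∧ C s s'
    · exact ⟨t, t, Relation.ReflTransGen.refl, Or.inr ⟨hcase.1, rfl⟩, hst,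
        hequiv.trans (hequiv.symm hcase.2) hst⟩
    · have hside := not_and_or.mp hcase
      have hct : HasCT Tr τ C s [(a, {x | C s' x})] := HasCT.step htr hside (HasCT.nil s')
      have hct' := hcons s t hst _ hct
      obtain ⟨t'', t', hTau, hC, hTr', hcol, _⟩ := hctInv hequiv hct' a _ [] rfl
      have hs't' : C s' t' := (Set.ext_iff.mp hcol t').mpr (hequiv.refl t')
      exact ⟨t'', t', hTau, Or.inl hTr', hequiv.trans hst hC, hs't'⟩
  have hD : CondD Tr τ C := by
    intro s t f hst hf0 hstep hrel
    have hsdiv : CDivergent Tr τ C s :=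
      ⟨f, hf0, hstep, fun k => hequiv.trans (hrel k) (hequiv.symm hst)⟩
    obtain ⟨g, hg0, hgstep, hgc⟩ := hdiv s t hst hsdiv
    exact ⟨g, hg0, hgstep, fun k l => hequiv.trans (hrel k) (hequiv.symm (hgc l))⟩
  exact ⟨hT, hD, fun s t h => ⟨C, fun _ _ hc => hequiv.symm hc, hT, hD, h⟩⟩
end

section
/- Branching bisimilarity with explicit divergence, as an equivalence relation, is itself a consistent divergence-preserving colouring. Hence the coloured-trace characterisation ≡_cΔ coincides with the relational characterisation of branching bisimilarity with explicit divergence. -/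
universe u

section Proof

variable {S A : Type} {Tr : S → A → S → Prop} {τ : A}

/-- Dependent-choice style chain construction. -/
lemma dc {α : Type} (Q : α → Prop) (L : α → α → Prop)
    (h : ∀ a, Q a → ∃ b, Q b ∧ L a b) (a0 : α) (h0 : Q a0) :
    ∃ g : ℕ → α, g 0 = a0 ∧ (∀ n, Q (g n)) ∧ ∀ n, L (g n) (g (n + 1)) := by
  choose F hQF hLF using h
  let g : ℕ → {a : α // Q a} :=
    fun n => Nat.rec ⟨a0, h0⟩ (fun _ p => ⟨F p.1 p.2, hQF p.1 p.2⟩) n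
  exact ⟨fun n => (g n).1, rfl, fun n => (g n).2, fun n => hLF (g n).1 (g n).2⟩

lemma taus_transfer {R : S → S → Prop} (hT : CondT Tr τ R) {s t u : S}
    (hst : R s t) (h : Taus Tr τ s u) : ∃ v, Taus Tr τ t v ∧ R u v := by
  induction h with
  | refl => exact ⟨t, .refl, hst⟩
  | tail hsb hstep ih =>
    obtain ⟨v, htv, hbv⟩ := ih
    obtain ⟨v'', v', h1, h2, _, h4⟩ := hT _ _ _ _ hbv hstep
    cases h2 with
    | inl h => exact ⟨v', (htv.trans h1).tail h, h4⟩
    | inr h => exact ⟨v', htv.trans (h.2 ▸ h1), h4⟩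

lemma stut_of_r {R : S → S → Prop} {a b : S} (h : R a b) : StutClos Tr τ R a b :=
  ⟨a, a, b, b, .refl, .refl, .refl, .refl, h, h⟩

lemma stut_symm {R : S → S → Prop} (hs : Symmetric R) :
    Symmetric (StutClos Tr τ R) := by
  rintro a b ⟨sm, sp, tm, tp, h1, h2, h3, h4, r1, r2⟩
  exact ⟨tm, tp, sm, sp, h3, h4, h1, h2, hs r2, hs r1⟩

lemma stut_condT {R : S → S → Prop} (hT : CondT Tr τ R) :
    CondT Tr τ (StutClos Tr τ R) := by
  rintro s t a s' ⟨sm, sp, tm, tp, h1, h2, h3, h4, r1, r2⟩ htr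
  obtain ⟨p, hp, rsp⟩ := taus_transfer hT r1 h1
  obtain ⟨p'', p', ha, hb, hc, hd⟩ := hT s p a s' rsp htr
  exact ⟨p'', p', (h4.trans hp).trans ha, hb, stut_of_r hc, stut_of_r hd⟩

lemma stut_inner {R : S → S → Prop} (hT : CondT Tr τ R) (hD : CondD Tr τ R)
    {s p : S} (f : ℕ → S) (hf0 : f 0 = s) (hsteps : ∀ k, Tr (f k) τ (f (k + 1)))
    (hsp : R s p) : ∃ q j, Tr p τ q ∧ StutClos Tr τ R (f j) q := by
  classical
  by_cases hall : ∀ k, R (f k) p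
  · obtain ⟨g, hg0, hgs, hrel⟩ := hD s p f hsp hf0 hsteps hall
    refine ⟨g 1, 0, ?_, stut_of_r (hrel 0 1)⟩
    have := hgs 0
    rwa [hg0] at this
  · push_neg at hall
    have h0 : R (f 0) p := by rw [hf0]; exact hsp
    set k₀ := Nat.find hall with hk₀def
    have hk₀ : ¬ R (f k₀) p := Nat.find_spec hall
    have hk₀ne : k₀ ≠ 0 := by intro h; rw [h] at hk₀; exact hk₀ h0
    obtain ⟨j, hj'⟩ := Nat.exists_eq_succ_of_ne_zero hk₀ne
    have hlt : j < Nat.find hall := by rw [← hk₀def]; omega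
    have hj : R (f j) p := not_not.mp (Nat.find_min hall hlt)
    obtain ⟨p'', p', htaus, hopt, hjp'', hj1p'⟩ := hT (f j) p τ (f (j + 1)) hj (hsteps j)
    rcases htaus.cases_head with heq | ⟨q, hpq, hqp''⟩
    · cases hopt with
      | inl htr => exact ⟨p', j + 1, heq ▸ htr, stut_of_r hj1p'⟩
      | inr h =>
        exfalso
        apply hk₀
        rw [hj']
        rw [← h.2, ← heq] at hj1p'
        exact hj1p'
    · exact ⟨q, j, hpq,
        ⟨f j, f j, p, p'', .refl, .refl, .single hpq, hqp'', hjp'', hj⟩⟩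

lemma stut_condD2 {R : S → S → Prop} (hT : CondT Tr τ R) (hD : CondD Tr τ R) :
    CondD2 Tr τ (StutClos Tr τ R) := by
  rintro s t f ⟨sm, sp, tm, tp, h1, h2, h3, h4, r1, r2⟩ hf0 hsteps
  obtain ⟨p, htpp, rsp⟩ := taus_transfer hT r1 h1
  rcases h4.cases_head with heq | ⟨t₁, ht1, h4'⟩
  · subst heq
    rcases htpp.cases_head with heq2 | ⟨t₁, ht1, hrest⟩
    · subst heq2
      obtain ⟨q, j, htq, hstut⟩ := stut_inner hT hD f hf0 hsteps rsp
      exact ⟨q, j, htq, hstut⟩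
    · refine ⟨t₁, 0, ht1, ?_⟩
      rw [hf0]
      exact ⟨s, sp, tm, p, .refl, h2, h3.tail ht1, hrest, rsp, r2⟩
  · refine ⟨t₁, 0, ht1, ?_⟩
    rw [hf0]
    exact ⟨sm, sp, tm, tp, h1, h2, h3.tail ht1, h4', r1, r2⟩

/-- Composition of relations. -/
def Comp (R1 R2 : S → S → Prop) (x z : S) : Prop := ∃ y, R1 x y ∧ R2 y z

lemma comp_condT_s18 {R1 R2 : S → S → Prop} (hT1 : CondT Tr τ R1) (hT2 : CondT Tr τ R2) :
    CondT Tr τ (Comp R1 R2) := by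
  rintro s t a s' ⟨u, h1, h2⟩ htr
  obtain ⟨u'', u', hu1, hu2, hu3, hu4⟩ := hT1 s u a s' h1 htr
  obtain ⟨t₂, ht2, r2'⟩ := taus_transfer hT2 h2 hu1
  cases hu2 with
  | inr h => exact ⟨t₂, t₂, ht2, Or.inr ⟨h.1, rfl⟩, ⟨u'', hu3, r2'⟩, ⟨u', hu4, h.2 ▸ r2'⟩⟩
  | inl h =>
    obtain ⟨t₃, t₄, hv1, hv2, hv3, hv4⟩ := hT2 u'' t₂ a u' r2' h
    exact ⟨t₃, t₄, ht2.trans hv1, hv2, ⟨u'', hu3, hv3⟩, ⟨u', hu4, hv4⟩⟩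

lemma comp_condD2 {R1 R2 : S → S → Prop} (hD1 : CondD2 Tr τ R1) (hD2 : CondD2 Tr τ R2) :
    CondD2 Tr τ (Comp R1 R2) := by
  rintro s t f ⟨u, h1, h2⟩ hf0 hsteps
  have step : ∀ x : S × ℕ, R1 (f x.2) x.1 →
      ∃ y : S × ℕ, R1 (f y.2) y.1 ∧ Tr x.1 τ y.1 := by
    rintro ⟨v, k⟩ hv
    obtain ⟨v', m, htr, hr⟩ := hD1 (f k) v (fun m => f (k + m)) hv rfl (fun m => hsteps (k + m))
    exact ⟨(v', k + m), hr, htr⟩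
  obtain ⟨g, hg0, hQ, hL⟩ := dc (fun x : S × ℕ => R1 (f x.2) x.1)
    (fun x y => Tr x.1 τ y.1) step (u, 0) (show R1 (f 0) u by rw [hf0]; exact h1)
  obtain ⟨t', n, htr, hr2⟩ := hD2 u t (fun n => (g n).1) h2
    (show (g 0).1 = u by rw [hg0]) hL
  exact ⟨t', (g n).2, htr, ⟨(g n).1, hQ n, hr2⟩⟩

lemma approx2_symm : Symmetric (Approx2 Tr τ) := by
  rintro a b ⟨R, hs, hT, hD, hab⟩
  exact ⟨R, hs, hT, hD, hs hab⟩

lemma approx2_condT : CondT Tr τ (Approx2 Tr τ) := by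
  rintro s t a s' ⟨R, hs, hT, hD, hst⟩ htr
  obtain ⟨t'', t', x1, x2, x3, x4⟩ := hT s t a s' hst htr
  exact ⟨t'', t', x1, x2, ⟨R, hs, hT, hD, x3⟩, ⟨R, hs, hT, hD, x4⟩⟩

lemma approx2_condD2 : CondD2 Tr τ (Approx2 Tr τ) := by
  rintro s t f ⟨R, hs, hT, hD, hst⟩ hf0 hsteps
  obtain ⟨t', k, x1, x2⟩ := hD s t f hst hf0 hsteps
  exact ⟨t', k, x1, ⟨R, hs, hT, hD, x2⟩⟩

lemma approx2_refl (s : S) : Approx2 Tr τ s s := by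
  refine ⟨fun x y => x = y, fun _ _ h => h.symm, ?_, ?_, rfl⟩
  · rintro s t a s' rfl h
    exact ⟨s, s', .refl, Or.inl h, rfl, rfl⟩
  · rintro s t f rfl hf0 hsteps
    refine ⟨f 1, 1, ?_, rfl⟩
    have := hsteps 0
    rwa [hf0] at this

lemma approx2_trans {a b c : S} (h1 : Approx2 Tr τ a b) (h2 : Approx2 Tr τ b c) :
    Approx2 Tr τ a c := by
  obtain ⟨R1, hs1, hT1, hD1, h1⟩ := h1
  obtain ⟨R2, hs2, hT2, hD2, h2⟩ := h2
  refine ⟨fun x y => Comp R1 R2 x y ∨ Comp R2 R1 x y, ?_, ?_, ?_, Or.inl ⟨b, h1, h2⟩⟩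
  · rintro x y (⟨u, ha, hb⟩ | ⟨u, ha, hb⟩)
    · exact Or.inr ⟨u, hs2 hb, hs1 ha⟩
    · exact Or.inl ⟨u, hs1 hb, hs2 ha⟩
  · rintro s t a' s' (h | h) htr
    · obtain ⟨t'', t', x1, x2, x3, x4⟩ := comp_condT_s18 hT1 hT2 s t a' s' h htr
      exact ⟨t'', t', x1, x2, Or.inl x3, Or.inl x4⟩
    · obtain ⟨t'', t', x1, x2, x3, x4⟩ := comp_condT_s18 hT2 hT1 s t a' s' h htr
      exact ⟨t'', t', x1, x2, Or.inr x3, Or.inr x4⟩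
  · rintro s t f (h | h) hf0 hsteps
    · obtain ⟨t', k, x1, x2⟩ := comp_condD2 hD1 hD2 s t f h hf0 hsteps
      exact ⟨t', k, x1, Or.inl x2⟩
    · obtain ⟨t', k, x1, x2⟩ := comp_condD2 hD2 hD1 s t f h hf0 hsteps
      exact ⟨t', k, x1, Or.inr x2⟩

lemma approx2_equiv : Equivalence (Approx2 Tr τ) :=
  ⟨approx2_refl, fun h => approx2_symm h, fun h1 h2 => approx2_trans h1 h2⟩

lemma approx2_condD : CondD Tr τ (Approx2 Tr τ) := by
  intro s t f hst hf0 hsteps hrel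
  have step : ∀ x : S × ℕ, Approx2 Tr τ (f x.2) x.1 →
      ∃ y : S × ℕ, Approx2 Tr τ (f y.2) y.1 ∧ Tr x.1 τ y.1 := by
    rintro ⟨v, k⟩ hv
    obtain ⟨v', m, htr, hr⟩ := approx2_condD2 (f k) v (fun m => f (k + m)) hv rfl
      (fun m => hsteps (k + m))
    exact ⟨(v', k + m), hr, htr⟩
  obtain ⟨g, hg0, hQ, hL⟩ := dc (fun x : S × ℕ => Approx2 Tr τ (f x.2) x.1)
    (fun x y => Tr x.1 τ y.1) step (t, 0) (show Approx2 Tr τ (f 0) t by rw [hf0]; exact hst)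
  refine ⟨fun n => (g n).1, show (g 0).1 = t by rw [hg0], hL, fun k l => ?_⟩
  exact approx2_equiv.trans (hrel k)
    (approx2_equiv.trans (approx2_equiv.symm (hrel (g l).2)) (hQ l))

lemma bbed_to_approx2 {s t : S} (h : BBED Tr τ s t) : Approx2 Tr τ s t := by
  obtain ⟨R, hs, hT, hD, hst⟩ := h
  exact ⟨StutClos Tr τ R, stut_symm hs, stut_condT hT, stut_condD2 hT hD,
    ⟨s, s, t, t, .refl, .refl, .refl, .refl, hst, hst⟩⟩

lemma approx2_to_bbed {s t : S} (h : Approx2 Tr τ s t) : BBED Tr τ s t :=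
  ⟨Approx2 Tr τ, fun _ _ h' => approx2_symm h', approx2_condT, approx2_condD, h⟩

lemma bbed_equiv : Equivalence (BBED Tr τ) :=
  ⟨fun s => approx2_to_bbed (approx2_refl s),
   fun h => approx2_to_bbed (approx2_symm (bbed_to_approx2 h)),
   fun h1 h2 => approx2_to_bbed (approx2_trans (bbed_to_approx2 h1) (bbed_to_approx2 h2))⟩

lemma bbed_condT : CondT Tr τ (BBED Tr τ) := by
  rintro s t a s' ⟨R, hs, hT, hD, hst⟩ htr
  obtain ⟨t'', t', x1, x2, x3, x4⟩ := hT s t a s' hst htr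
  exact ⟨t'', t', x1, x2, ⟨R, hs, hT, hD, x3⟩, ⟨R, hs, hT, hD, x4⟩⟩

lemma bbed_condD : CondD Tr τ (BBED Tr τ) := by
  intro s t f hst hf0 hsteps hrel
  obtain ⟨g, a, b, c⟩ := approx2_condD s t f (bbed_to_approx2 hst) hf0 hsteps
    (fun k => bbed_to_approx2 (hrel k))
  exact ⟨g, a, b, fun k l => approx2_to_bbed (c k l)⟩

lemma bbed_stutter {s s₁ s₂ : S} (h01 : Taus Tr τ s s₁) (h12 : Taus Tr τ s₁ s₂)
    (h : BBED Tr τ s s₂) : BBED Tr τ s s₁ := by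
  obtain ⟨R, hs, hT, hD, h02⟩ := h
  apply approx2_to_bbed
  exact ⟨StutClos Tr τ R, stut_symm hs, stut_condT hT, stut_condD2 hT hD,
    ⟨s, s₂, s, s₂, .refl, h01.trans h12, h01, h12, h02, hs h02⟩⟩

lemma taus_chain_hasCT {tr : List (A × Set S)} :
    ∀ {t t'' : S}, Taus Tr τ t t'' → BBED Tr τ t t'' →
      HasCT Tr τ (BBED Tr τ) t'' tr → HasCT Tr τ (BBED Tr τ) t tr := by
  intro t t'' hT
  induction hT using Relation.ReflTransGen.head_induction_on with
  | refl => exact fun _ h => h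
  | head hstep hrest ih =>
    intro hb hct
    rename_i a c
    have hac : BBED Tr τ a c := bbed_stutter (.single hstep) hrest hb
    exact .tau hstep hac (ih (bbed_equiv.trans (bbed_equiv.symm hac) hb) hct)

lemma bbed_consistent : Consistent Tr τ (BBED Tr τ) := by
  intro s t hst tr h
  revert t
  induction h with
  | nil s => exact fun t _ => .nil t
  | tau htr hc h ih =>
    exact fun t hst => ih t (bbed_equiv.trans (bbed_equiv.symm hc) hst)
  | step htr hcond h ih =>
    intro t hst
    rename_i s s' a tr
    obtain ⟨t'', t', ht, hopt, hb1, hb2⟩ := bbed_condT s t a s' hst htr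
    cases hopt with
    | inr h' =>
      exfalso
      have hss' : BBED Tr τ s s' :=
        bbed_equiv.trans hb1 (h'.2 ▸ bbed_equiv.symm hb2)
      cases hcond with
      | inl hne => exact hne h'.1
      | inr hnb => exact hnb hss'
    | inl hstep' =>
      have hset : {x | BBED Tr τ s' x} = {x | BBED Tr τ t' x} :=
        Set.ext fun x => ⟨fun hx => bbed_equiv.trans (bbed_equiv.symm hb2) hx,
          fun hx => bbed_equiv.trans hb2 hx⟩
      rw [hset]
      have htt'' : BBED Tr τ t t'' := bbed_equiv.trans (bbed_equiv.symm hst) hb1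
      refine taus_chain_hasCT ht htt'' ?_
      refine .step hstep' ?_ (ih t' hb2)
      cases hcond with
      | inl hne => exact Or.inl hne
      | inr hnb =>
        refine Or.inr fun hb => hnb ?_
        exact bbed_equiv.trans hb1 (bbed_equiv.trans hb (bbed_equiv.symm hb2))

lemma bbed_preservesDiv : PreservesDiv Tr τ (BBED Tr τ) := by
  rintro s t hst ⟨f, hf0, hsteps, hrel⟩
  have hrel' : ∀ k, BBED Tr τ (f k) t := fun k => bbed_equiv.trans (hrel k) hst
  obtain ⟨g, hg0, hgs, hfg⟩ := bbed_condD s t f hst hf0 hsteps hrel'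
  exact ⟨g, hg0, hgs, fun l => bbed_equiv.trans (bbed_equiv.symm (hfg 0 l)) (hrel' 0)⟩

lemma hasCT_cons {C : S → S → Prop} (hC : Equivalence C) :
    ∀ {t : S} {l : List (A × Set S)}, HasCT Tr τ C t l →
      ∀ (a : A) (γ : Set S) (tr : List (A × Set S)), l = (a, γ) :: tr →
      ∃ t'' t', Taus Tr τ t t'' ∧ C t t'' ∧ Tr t'' a t' ∧ γ = {x | C t' x} ∧
        HasCT Tr τ C t' tr := by
  intro t l h
  induction h with
  | nil s => exact fun a γ tr heq => absurd heq (by simp)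
  | tau htr hc h ih =>
    intro a γ tr heq
    obtain ⟨t'', t', x1, x2, x3, x4, x5⟩ := ih a γ tr heq
    exact ⟨t'', t', x1.head htr, hC.trans hc x2, x3, x4, x5⟩
  | step htr hcond h ih =>
    intro a' γ' tr' heq
    rename_i s s' a tr
    injection heq with h1 h2
    injection h1 with ha hγ
    subst ha; subst hγ; subst h2
    exact ⟨s, s', .refl, hC.refl s, htr, rfl, h⟩

lemma colouring_to_bbed {s t : S} (C : S → S → Prop) (hC : Equivalence C)
    (hcons : Consistent Tr τ C) (hdiv : PreservesDiv Tr τ C) (hst : C s t) :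
    BBED Tr τ s t := by
  refine ⟨C, fun _ _ h => hC.symm h, ?_, ?_, hst⟩
  · intro s t a s' hst htr
    by_cases hca : a = τ ∧ C s s'
    · exact ⟨t, t, .refl, Or.inr ⟨hca.1, rfl⟩, hst,
        hC.trans (hC.symm hca.2) hst⟩
    · have hcond : a ≠ τ ∨ ¬ C s s' := by tauto
      have h1 : HasCT Tr τ C s [(a, {x | C s' x})] := .step htr hcond (.nil s')
      have h2 := hcons s t hst _ h1
      obtain ⟨t'', t', x1, x2, x3, x4, _⟩ := hasCT_cons hC h2 a _ [] rfl
      refine ⟨t'', t', x1, Or.inl x3, hC.trans hst x2, ?_⟩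
      exact (Set.ext_iff.mp x4 t').mpr (hC.refl t')
  · intro s t f hst hf0 hsteps hrel
    have hdiv_s : CDivergent Tr τ C s :=
      ⟨f, hf0, hsteps, fun k => hC.trans (hrel k) (hC.symm hst)⟩
    obtain ⟨g, hg0, hgsteps, hgrel⟩ := hdiv s t hst hdiv_s
    exact ⟨g, hg0, hgsteps, fun k l => hC.trans (hrel k) (hC.symm (hgrel l))⟩

end Proof

theorem bbed_colouring {S A : Type} (Tr : S → A → S → Prop) (τ : A) :
    Equivalence (BBED Tr τ) ∧ Consistent Tr τ (BBED Tr τ) ∧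
      PreservesDiv Tr τ (BBED Tr τ) ∧
      ∀ s t : S, (∃ C : S → S → Prop, Equivalence C ∧ Consistent Tr τ C ∧
          PreservesDiv Tr τ C ∧ C s t) ↔ BBED Tr τ s t := by
  refine ⟨bbed_equiv, bbed_consistent, bbed_preservesDiv, fun s t => ⟨?_, ?_⟩⟩
  · rintro ⟨C, hC, hcons, hdiv, hst⟩
    exact colouring_to_bbed C hC hcons hdiv hst
  · intro h
    exact ⟨BBED Tr τ, bbed_equiv, bbed_consistent, bbed_preservesDiv, h⟩
end
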